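/- Let n ≥ 2 be an integer and λ > n a real number. Let P⁽¹⁾ : ℝ × (0,∞) → ℝ be a smooth solution of Δ̂ₙ P⁽¹⁾ + λ r⁻² P⁽¹⁾ = 0, and let P⁽²⁾, P⁽³⁾, Q⁽¹⁾, Q⁽²⁾, R, S be smooth functions satisfying: P⁽²⁾ = −(z/r) P⁽¹⁾; P⁽³⁾ = (z²/r²) P⁽¹⁾; Q⁽²⁾ = −(z/r) Q⁽¹⁾; n·S = −P⁽¹⁾ − P⁽³⁾; λ·Q⁽¹⁾ = r ∂_z P⁽¹⁾ + r ∂_r P⁽²⁾ + n P⁽²⁾; λ·Q⁽²⁾ = r ∂_z P⁽²⁾ + r ∂_r P⁽³⁾ + n P⁽³⁾ − n S; and (n−1)(λ−n)·R = r ∂_z Q⁽¹⁾ + r ∂_r Q⁽²⁾ + (n+1) Q⁽²⁾ + S. Then on ℝ × (0,∞) the following six equations hold: Δ̂ₙ P⁽²⁾ + (λ+n) r⁻² P⁽²⁾ − 2 λ r⁻² Q⁽¹⁾ = 0; Δ̂ₙ Q⁽¹⁾ + (λ−n+2) r⁻² Q⁽¹⁾ − 2 r⁻² P⁽²⁾ =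 0; Δ̂ₙ P⁽³⁾ + (λ+2n) r⁻² P⁽³⁾ − 2n r⁻² S − 4 λ r⁻² Q⁽²⁾ = 0; Δ̂ₙ S + (λ+2) r⁻² S − 2 r⁻² P⁽³⁾ + (4λ/n) r⁻² Q⁽²⁾ = 0; Δ̂ₙ Q⁽²⁾ + (λ+4) r⁻² Q⁽²⁾ − 2 r⁻² P⁽³⁾ + 2 r⁻² S + 2(n−1)(n−λ) r⁻² R = 0; and Δ̂ₙ R + (λ−2n+2) r⁻² R − (4/n) r⁻² Q⁽²⁾ = 0. -/

import Mathlib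

/-- Partial derivative in the first variable `z`. -/
noncomputable def pdz (f : ℝ → ℝ → ℝ) (z r : ℝ) : ℝ := deriv (fun z' => f z' r) z

/-- Partial derivative in the second variable `r`. -/
noncomputable def pdr (f : ℝ → ℝ → ℝ) (z r : ℝ) : ℝ := deriv (fun r' => f z r') r

/-- The operator `Δ̂ₙ f = -∂²f/∂z² - ∂²f/∂r² - (n/r)·∂f/∂r`. -/
noncomputable def hatLap (n : ℕ) (f : ℝ → ℝ → ℝ) (z r : ℝ) : ℝ :=
  - pdz (pdz f) z r - pdr (pdr f) z r - ((n : ℝ) / r) * pdr f z r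

/-- The first order operator `∂_V f = r·∂f/∂z - z·∂f/∂r`. -/
noncomputable def dV (f : ℝ → ℝ → ℝ) (z r : ℝ) : ℝ :=
  r * pdz f z r - z * pdr f z r


open Function Filter Set Topology

def Up : Set (ℝ × ℝ) := {p : ℝ × ℝ | 0 < p.2}

def Sm (f : ℝ → ℝ → ℝ) : Prop := ContDiffOn ℝ (⊤:ℕ∞) (Function.uncurry f) Up

lemma Up_open : IsOpen Up := isOpen_lt continuous_const continuous_snd

lemma mem_Up {z r : ℝ} (hr : 0 < r) : (z, r) ∈ Up := hr

lemma Sm.fdiff {f : ℝ → ℝ → ℝ} (hf : Sm f) {z r : ℝ} (hr : 0 < r) :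
    HasFDerivAt (uncurry f) (fderiv ℝ (uncurry f) (z, r)) (z, r) :=
  (((hf.contDiffAt (Up_open.mem_nhds (mem_Up hr))).differentiableAt (by simp)).hasFDerivAt)

lemma hasDerivAt_z {f : ℝ → ℝ → ℝ} (hf : Sm f) {z r : ℝ} (hr : 0 < r) :
    HasDerivAt (fun z' => f z' r) (fderiv ℝ (uncurry f) (z, r) (1, 0)) z := by
  have h1 : HasDerivAt (fun z' : ℝ => (z', r)) ((1 : ℝ), (0 : ℝ)) z :=
    (hasDerivAt_id z).prodMk (hasDerivAt_const z r)
  exact (hf.fdiff hr).comp_hasDerivAt z h1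

lemma hasDerivAt_r {f : ℝ → ℝ → ℝ} (hf : Sm f) {z r : ℝ} (hr : 0 < r) :
    HasDerivAt (fun r' => f z r') (fderiv ℝ (uncurry f) (z, r) (0, 1)) r := by
  have h1 : HasDerivAt (fun r' : ℝ => (z, r')) ((0 : ℝ), (1 : ℝ)) r :=
    (hasDerivAt_const r z).prodMk (hasDerivAt_id r)
  exact (hf.fdiff hr).comp_hasDerivAt r h1

lemma pdz_eq_fderiv {f : ℝ → ℝ → ℝ} (hf : Sm f) {z r : ℝ} (hr : 0 < r) :
    pdz f z r = fderiv ℝ (uncurry f) (z, r) (1, 0) := (hasDerivAt_z hf hr).deriv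

lemma pdr_eq_fderiv {f : ℝ → ℝ → ℝ} (hf : Sm f) {z r : ℝ} (hr : 0 < r) :
    pdr f z r = fderiv ℝ (uncurry f) (z, r) (0, 1) := (hasDerivAt_r hf hr).deriv

lemma hdz {f : ℝ → ℝ → ℝ} (hf : Sm f) {z r : ℝ} (hr : 0 < r) :
    HasDerivAt (fun z' => f z' r) (pdz f z r) z := by
  rw [pdz_eq_fderiv hf hr]; exact hasDerivAt_z hf hr

lemma hdr {f : ℝ → ℝ → ℝ} (hf : Sm f) {z r : ℝ} (hr : 0 < r) :
    HasDerivAt (fun r' => f z r') (pdr f z r) r := by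
  rw [pdr_eq_fderiv hf hr]; exact hasDerivAt_r hf hr

lemma Sm.pdz {f : ℝ → ℝ → ℝ} (hf : Sm f) : Sm (pdz f) := by
  have h1 : ContDiffOn ℝ (⊤:ℕ∞) (fderiv ℝ (uncurry f)) Up :=
    hf.fderiv_of_isOpen Up_open (by simp)
  have h2 : ContDiffOn ℝ (⊤:ℕ∞) (fun p => fderiv ℝ (uncurry f) p ((1:ℝ), (0:ℝ))) Up :=
    h1.clm_apply contDiffOn_const
  refine h2.congr ?_
  rintro ⟨z, r⟩ hr
  exact pdz_eq_fderiv hf hr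

lemma Sm.pdr {f : ℝ → ℝ → ℝ} (hf : Sm f) : Sm (pdr f) := by
  have h1 : ContDiffOn ℝ (⊤:ℕ∞) (fderiv ℝ (uncurry f)) Up :=
    hf.fderiv_of_isOpen Up_open (by simp)
  have h2 : ContDiffOn ℝ (⊤:ℕ∞) (fun p => fderiv ℝ (uncurry f) p ((0:ℝ), (1:ℝ))) Up :=
    h1.clm_apply contDiffOn_const
  refine h2.congr ?_
  rintro ⟨z, r⟩ hr
  exact pdr_eq_fderiv hf hr

lemma cong_pdz {f g : ℝ → ℝ → ℝ} (h : ∀ z r : ℝ, 0 < r → f z r = g z r) :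
    ∀ z r : ℝ, 0 < r → pdz f z r = pdz g z r := by
  intro z r hr
  exact Filter.EventuallyEq.deriv_eq (Filter.Eventually.of_forall fun z' => h z' r hr)

lemma cong_pdr {f g : ℝ → ℝ → ℝ} (h : ∀ z r : ℝ, 0 < r → f z r = g z r) :
    ∀ z r : ℝ, 0 < r → pdr f z r = pdr g z r := by
  intro z r hr
  apply Filter.EventuallyEq.deriv_eq
  filter_upwards [Ioi_mem_nhds hr] with r' hr' using h z r' hr'

lemma cong_hatLap {f g : ℝ → ℝ → ℝ} (h : ∀ z r : ℝ, 0 < r → f z r = g z r) (n : ℕ) :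
    ∀ z r : ℝ, 0 < r → hatLap n f z r = hatLap n g z r := by
  intro z r hr
  unfold hatLap
  rw [cong_pdz (cong_pdz h) z r hr, cong_pdr (cong_pdr h) z r hr, cong_pdr h z r hr]

lemma schwarz {f : ℝ → ℝ → ℝ} (hf : Sm f) :
    ∀ z r : ℝ, 0 < r → pdz (pdr f) z r = pdr (pdz f) z r := by
  intro z r hr
  have h1 : ContDiffOn ℝ (⊤:ℕ∞) (fderiv ℝ (uncurry f)) Up :=
    hf.fderiv_of_isOpen Up_open (by simp)
  have hd : DifferentiableAt ℝ (fderiv ℝ (uncurry f)) (z, r) :=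
    (h1.contDiffAt (Up_open.mem_nhds (mem_Up hr))).differentiableAt (by simp)
  set A := fderiv ℝ (fderiv ℝ (uncurry f)) (z, r) with hA
  have hsym : A (0, 1) (1, 0) = A (1, 0) (0, 1) := by
    apply second_derivative_symmetric_of_eventually (f := uncurry f)
    · filter_upwards [Up_open.mem_nhds (mem_Up hr)] with p hp
      have : (0:ℝ) < p.2 := hp
      have := Sm.fdiff hf (z := p.1) (r := p.2) this
      simpa using this
    · exact hd.hasFDerivAt
  -- compute pdz (pdr f)
  have hcurve : HasDerivAt (fun z' : ℝ => fderiv ℝ (uncurry f) (z', r)) (A ((1:ℝ), (0:ℝ))) z := by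
    have h1' : HasDerivAt (fun z' : ℝ => (z', r)) ((1 : ℝ), (0 : ℝ)) z :=
      (hasDerivAt_id z).prodMk (hasDerivAt_const z r)
    exact hd.hasFDerivAt.comp_hasDerivAt z h1'
  have e1 : pdz (pdr f) z r = A (1, 0) (0, 1) := by
    have funeq : (fun z' => pdr f z' r) = fun z' => fderiv ℝ (uncurry f) (z', r) (0, 1) :=
      funext fun z' => pdr_eq_fderiv hf hr
    have h5 := hcurve.clm_apply (hasDerivAt_const z ((0:ℝ), (1:ℝ)))
    show deriv (fun z' => pdr f z' r) z = _
    rw [funeq]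
    simpa using h5.deriv
  have hcurve2 : HasDerivAt (fun r' : ℝ => fderiv ℝ (uncurry f) (z, r')) (A ((0:ℝ), (1:ℝ))) r := by
    have h1' : HasDerivAt (fun r' : ℝ => (z, r')) ((0 : ℝ), (1 : ℝ)) r :=
      (hasDerivAt_const r z).prodMk (hasDerivAt_id r)
    exact hd.hasFDerivAt.comp_hasDerivAt r h1'
  have e2 : pdr (pdz f) z r = A (0, 1) (1, 0) := by
    have ev : (fun r' => pdz f z r') =ᶠ[𝓝 r] fun r' => fderiv ℝ (uncurry f) (z, r') (1, 0) := by
      filter_upwards [Ioi_mem_nhds hr] with r' hr' using pdz_eq_fderiv hf hr'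
    have h5 := hcurve2.clm_apply (hasDerivAt_const r ((1:ℝ), (0:ℝ)))
    show deriv (fun r' => pdz f z r') r = _
    rw [ev.deriv_eq]
    simpa using h5.deriv
  rw [e1, e2, hsym]

/-! ### primitive derivative rules -/

lemma dz_cmul {f : ℝ → ℝ → ℝ} (c : ℝ → ℝ) (hf : Sm f) :
    ∀ z r : ℝ, 0 < r → pdz (fun z r => c r * f z r) z r = c r * pdz f z r := by
  intro z r hr
  exact ((hdz hf hr).const_mul (c r)).deriv

lemma dr_cmul {f : ℝ → ℝ → ℝ} {c : ℝ → ℝ} {c' : ℝ} (hf : Sm f) (z r : ℝ) (hr : 0 < r)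
    (hc : HasDerivAt c c' r) :
    pdr (fun z r => c r * f z r) z r = c' * f z r + c r * pdr f z r :=
  (hc.mul (hdr hf hr)).deriv

lemma dz_zmul {f : ℝ → ℝ → ℝ} (hf : Sm f) :
    ∀ z r : ℝ, 0 < r → pdz (fun z r => z * f z r) z r = f z r + z * pdz f z r := by
  intro z r hr
  have h := ((hasDerivAt_id' z).mul (hdz hf hr)).deriv
  simp only [one_mul] at h; exact h

lemma dr_zmul {f : ℝ → ℝ → ℝ} (hf : Sm f) :
    ∀ z r : ℝ, 0 < r → pdr (fun z r => z * f z r) z r = z * pdr f z r := by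
  intro z r hr
  exact ((hdr hf hr).const_mul z).deriv

lemma dz_add {f g : ℝ → ℝ → ℝ} (hf : Sm f) (hg : Sm g) :
    ∀ z r : ℝ, 0 < r → pdz (fun z r => f z r + g z r) z r = pdz f z r + pdz g z r := by
  intro z r hr
  exact ((hdz hf hr).add (hdz hg hr)).deriv

lemma dr_add {f g : ℝ → ℝ → ℝ} (hf : Sm f) (hg : Sm g) :
    ∀ z r : ℝ, 0 < r → pdr (fun z r => f z r + g z r) z r = pdr f z r + pdr g z r := by
  intro z r hr
  exact ((hdr hf hr).add (hdr hg hr)).deriv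

lemma dz_sub {f g : ℝ → ℝ → ℝ} (hf : Sm f) (hg : Sm g) :
    ∀ z r : ℝ, 0 < r → pdz (fun z r => f z r - g z r) z r = pdz f z r - pdz g z r := by
  intro z r hr
  exact ((hdz hf hr).sub (hdz hg hr)).deriv

lemma dr_sub {f g : ℝ → ℝ → ℝ} (hf : Sm f) (hg : Sm g) :
    ∀ z r : ℝ, 0 < r → pdr (fun z r => f z r - g z r) z r = pdr f z r - pdr g z r := by
  intro z r hr
  exact ((hdr hf hr).sub (hdr hg hr)).deriv

lemma dz_neg {f : ℝ → ℝ → ℝ} (hf : Sm f) :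
    ∀ z r : ℝ, 0 < r → pdz (fun z r => -f z r) z r = -pdz f z r := by
  intro z r hr
  exact ((hdz hf hr).neg).deriv

lemma dr_neg {f : ℝ → ℝ → ℝ} (hf : Sm f) :
    ∀ z r : ℝ, 0 < r → pdr (fun z r => -f z r) z r = -pdr f z r := by
  intro z r hr
  exact ((hdr hf hr).neg).deriv

/-! ### smoothness closure -/

lemma Sm.add {f g : ℝ → ℝ → ℝ} (hf : Sm f) (hg : Sm g) : Sm (fun z r => f z r + g z r) :=
  ContDiffOn.add hf hg

lemma Sm.sub {f g : ℝ → ℝ → ℝ} (hf : Sm f) (hg : Sm g) : Sm (fun z r => f z r - g z r) :=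
  ContDiffOn.sub hf hg

lemma Sm.neg {f : ℝ → ℝ → ℝ} (hf : Sm f) : Sm (fun z r => -f z r) := ContDiffOn.neg hf

lemma Sm.cmul {f : ℝ → ℝ → ℝ} {c : ℝ → ℝ} (hc : ContDiffOn ℝ (⊤:ℕ∞) c (Set.Ioi (0:ℝ)))
    (hf : Sm f) : Sm (fun z r => c r * f z r) := by
  have h1 : ContDiffOn ℝ (⊤:ℕ∞) (fun p : ℝ × ℝ => c p.2) Up :=
    hc.comp contDiff_snd.contDiffOn (fun p hp => hp)
  exact ContDiffOn.mul h1 hf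

lemma Sm.zmul {f : ℝ → ℝ → ℝ} (hf : Sm f) : Sm (fun z r => z * f z r) :=
  ContDiffOn.mul contDiff_fst.contDiffOn hf

lemma cdiff_inv : ContDiffOn ℝ (⊤:ℕ∞) (fun r : ℝ => r⁻¹) (Set.Ioi (0:ℝ)) :=
  contDiffOn_id.inv (fun x hx => ne_of_gt hx)

lemma cdiff_neg_inv : ContDiffOn ℝ (⊤:ℕ∞) (fun r : ℝ => -r⁻¹) (Set.Ioi (0:ℝ)) := cdiff_inv.neg

lemma cdiff_inv_sq : ContDiffOn ℝ (⊤:ℕ∞) (fun r : ℝ => (r^2)⁻¹) (Set.Ioi (0:ℝ)) :=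
  (contDiffOn_id.pow 2).inv (fun x hx => pow_ne_zero _ (ne_of_gt hx))

lemma cdiff_const_mul {c : ℝ → ℝ} (a : ℝ) (hc : ContDiffOn ℝ (⊤:ℕ∞) c (Set.Ioi (0:ℝ))) :
    ContDiffOn ℝ (⊤:ℕ∞) (fun r : ℝ => a * c r) (Set.Ioi (0:ℝ)) := contDiffOn_const.mul hc

/-! ### concrete coefficient derivatives -/

lemma hd_neg_inv {r : ℝ} (hr : 0 < r) : HasDerivAt (fun r : ℝ => -r⁻¹) ((r^2)⁻¹) r := by
  have h := (hasDerivAt_inv hr.ne').neg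
  rw [neg_neg] at h; exact h

lemma hd_inv_sq {r : ℝ} (hr : 0 < r) :
    HasDerivAt (fun r : ℝ => (r^2)⁻¹) (-2 * (r^3)⁻¹) r := by
  have h := ((hasDerivAt_pow 2 r)).inv (pow_ne_zero 2 hr.ne')
  refine h.congr_deriv ?_
  have : r ≠ 0 := hr.ne'
  field_simp
  ring

/-! ### hatLap of composite shapes -/

lemma hat_smul (n : ℕ) (a : ℝ) {f : ℝ → ℝ → ℝ} (hf : Sm f) : ∀ z r : ℝ, 0 < r →
    hatLap n (fun z r => a * f z r) z r = a * hatLap n f z r := by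
  intro z0 r0 hr0
  have h1 : ∀ z r : ℝ, 0 < r → pdz (fun z r => a * f z r) z r = a * pdz f z r :=
    dz_cmul (fun _ => a) hf
  have h2 : ∀ z r : ℝ, 0 < r → pdr (fun z r => a * f z r) z r = a * pdr f z r := by
    intro z r hr
    have := dr_cmul (c := fun _ => a) hf z r hr (hasDerivAt_const r a)
    simpa using this
  have h3 : pdz (pdz (fun z r => a * f z r)) z0 r0 = a * pdz (pdz f) z0 r0 := by
    rw [cong_pdz h1 z0 r0 hr0]
    exact dz_cmul (fun _ => a) hf.pdz z0 r0 hr0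
  have h4 : pdr (pdr (fun z r => a * f z r)) z0 r0 = a * pdr (pdr f) z0 r0 := by
    rw [cong_pdr h2 z0 r0 hr0]
    have := dr_cmul (c := fun _ => a) hf.pdr z0 r0 hr0 (hasDerivAt_const r0 a)
    simpa using this
  simp only [hatLap]
  rw [h3, h4, h2 z0 r0 hr0]
  ring

lemma hat_add (n : ℕ) {f g : ℝ → ℝ → ℝ} (hf : Sm f) (hg : Sm g) : ∀ z r : ℝ, 0 < r →
    hatLap n (fun z r => f z r + g z r) z r = hatLap n f z r + hatLap n g z r := by
  intro z0 r0 hr0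
  have h3 : pdz (pdz (fun z r => f z r + g z r)) z0 r0
      = pdz (pdz f) z0 r0 + pdz (pdz g) z0 r0 := by
    rw [cong_pdz (dz_add hf hg) z0 r0 hr0]
    exact dz_add hf.pdz hg.pdz z0 r0 hr0
  have h4 : pdr (pdr (fun z r => f z r + g z r)) z0 r0
      = pdr (pdr f) z0 r0 + pdr (pdr g) z0 r0 := by
    rw [cong_pdr (dr_add hf hg) z0 r0 hr0]
    exact dr_add hf.pdr hg.pdr z0 r0 hr0
  simp only [hatLap]
  rw [h3, h4, dr_add hf hg z0 r0 hr0]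
  ring

lemma dzA {f : ℝ → ℝ → ℝ} (hf : Sm f) : ∀ z r : ℝ, 0 < r →
    pdz (fun z r => z * (-r⁻¹ * f z r)) z r = -r⁻¹ * f z r + z * (-r⁻¹ * pdz f z r) := by
  intro z r hr
  have hg : Sm (fun z r => -r⁻¹ * f z r) := Sm.cmul cdiff_neg_inv hf
  simp only [dz_zmul hg z r hr, dz_cmul (fun r => -r⁻¹) hf z r hr]

lemma drA {f : ℝ → ℝ → ℝ} (hf : Sm f) : ∀ z r : ℝ, 0 < r →
    pdr (fun z r => z * (-r⁻¹ * f z r)) z r = z * ((r^2)⁻¹ * f z r + -r⁻¹ * pdr f z r) := by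
  intro z r hr
  have hg : Sm (fun z r => -r⁻¹ * f z r) := Sm.cmul cdiff_neg_inv hf
  simp only [dr_zmul hg z r hr, dr_cmul hf z r hr (hd_neg_inv hr)]

lemma hat_A (n : ℕ) {f : ℝ → ℝ → ℝ} (hf : Sm f) : ∀ z r : ℝ, 0 < r →
    hatLap n (fun z r => z * (-r⁻¹ * f z r)) z r
      = -(z/r) * hatLap n f z r + (2/r) * pdz f z r - (2*z/r^2) * pdr f z r
        - (((n:ℝ)-2)*z/r^3) * f z r := by
  intro z0 r0 hr0
  have hg : Sm (fun z r => -r⁻¹ * f z r) := Sm.cmul cdiff_neg_inv hf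
  have hgz : Sm (fun z r => -r⁻¹ * pdz f z r) := Sm.cmul cdiff_neg_inv hf.pdz
  have hgr : Sm (fun z r => -r⁻¹ * pdr f z r) := Sm.cmul cdiff_neg_inv hf.pdr
  have h3 : pdz (pdz (fun z r => z * (-r⁻¹ * f z r))) z0 r0
      = -r0⁻¹ * pdz f z0 r0 + (-r0⁻¹ * pdz f z0 r0 + z0 * (-r0⁻¹ * pdz (pdz f) z0 r0)) := by
    rw [cong_pdz (dzA hf) z0 r0 hr0]
    simp only [dz_add hg (Sm.zmul hgz) z0 r0 hr0, dz_cmul (fun r => -r⁻¹) hf z0 r0 hr0,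
      dz_zmul hgz z0 r0 hr0, dz_cmul (fun r => -r⁻¹) hf.pdz z0 r0 hr0]
  have h4 : pdr (pdr (fun z r => z * (-r⁻¹ * f z r))) z0 r0
      = z0 * ((-2*(r0^3)⁻¹ * f z0 r0 + (r0^2)⁻¹ * pdr f z0 r0)
          + ((r0^2)⁻¹ * pdr f z0 r0 + -r0⁻¹ * pdr (pdr f) z0 r0)) := by
    rw [cong_pdr (drA hf) z0 r0 hr0]
    have hin : Sm (fun z r => (r^2)⁻¹ * f z r + -r⁻¹ * pdr f z r) :=
      Sm.add (Sm.cmul cdiff_inv_sq hf) hgr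
    simp only [dr_zmul hin z0 r0 hr0, dr_add (Sm.cmul cdiff_inv_sq hf) hgr z0 r0 hr0,
      dr_cmul hf z0 r0 hr0 (hd_inv_sq hr0), dr_cmul hf.pdr z0 r0 hr0 (hd_neg_inv hr0)]
  have h2 := drA hf z0 r0 hr0
  simp only [hatLap]
  rw [h3, h4, h2]
  have hr0' : r0 ≠ 0 := hr0.ne'
  field_simp
  ring

lemma hat_B (n : ℕ) {f : ℝ → ℝ → ℝ} (hf : Sm f) : ∀ z r : ℝ, 0 < r →
    hatLap n (fun z r => r * pdz f z r) z r
      = r * pdz (hatLap n f) z r - 2 * pdr (pdz f) z r - ((n:ℝ)/r) * pdz f z r := by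
  intro z0 r0 hr0
  have hfz := hf.pdz
  have hfr := hf.pdr
  have h1 : ∀ z r : ℝ, 0 < r → pdz (fun z r => r * pdz f z r) z r = r * pdz (pdz f) z r :=
    dz_cmul (fun r => r) hfz
  have h2 : ∀ z r : ℝ, 0 < r →
      pdr (fun z r => r * pdz f z r) z r = pdz f z r + r * pdr (pdz f) z r := by
    intro z r hr
    have := dr_cmul (c := fun r => r) hfz z r hr (hasDerivAt_id r)
    simpa using this
  have h3 : pdz (pdz (fun z r => r * pdz f z r)) z0 r0 = r0 * pdz (pdz (pdz f)) z0 r0 := by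
    rw [cong_pdz h1 z0 r0 hr0]
    exact dz_cmul (fun r => r) hfz.pdz z0 r0 hr0
  have h4 : pdr (pdr (fun z r => r * pdz f z r)) z0 r0
      = pdr (pdz f) z0 r0 + (pdr (pdz f) z0 r0 + r0 * pdr (pdr (pdz f)) z0 r0) := by
    rw [cong_pdr h2 z0 r0 hr0]
    have hrm : Sm (fun z r => r * pdr (pdz f) z r) := Sm.cmul contDiffOn_id hfz.pdr
    simp only [dr_add hfz hrm z0 r0 hr0]
    have := dr_cmul (c := fun r => r) hfz.pdr z0 r0 hr0 (hasDerivAt_id r0)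
    simp only [this]
    ring
  have hc : ContDiffOn ℝ (⊤:ℕ∞) (fun r : ℝ => (n:ℝ)/r) (Set.Ioi (0:ℝ)) :=
    contDiffOn_const.div contDiffOn_id (fun x hx => ne_of_gt hx)
  have h5 : pdz (hatLap n f) z0 r0
      = -pdz (pdz (pdz f)) z0 r0 - pdz (pdr (pdr f)) z0 r0
        - ((n:ℝ)/r0) * pdz (pdr f) z0 r0 := by
    have e : hatLap n f
        = fun z r => -pdz (pdz f) z r - pdr (pdr f) z r - ((n:ℝ)/r) * pdr f z r := rfl
    rw [e]
    simp only [dz_sub (Sm.sub (Sm.neg hfz.pdz) hfr.pdr) (Sm.cmul hc hfr) z0 r0 hr0,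
      dz_sub (Sm.neg hfz.pdz) hfr.pdr z0 r0 hr0, dz_neg hfz.pdz z0 r0 hr0,
      dz_cmul (fun r => (n:ℝ)/r) hfr z0 r0 hr0]
  have s1 := schwarz hf
  have s2 : pdz (pdr (pdr f)) z0 r0 = pdr (pdr (pdz f)) z0 r0 := by
    rw [schwarz hfr z0 r0 hr0]
    exact cong_pdr s1 z0 r0 hr0
  rw [h5]
  simp only [hatLap]
  rw [h3, h4, h2 z0 r0 hr0, s2, s1 z0 r0 hr0]
  ring

lemma hat_C (n : ℕ) {f : ℝ → ℝ → ℝ} (hf : Sm f) : ∀ z r : ℝ, 0 < r →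
    hatLap n (fun z r => z * pdr f z r) z r
      = z * pdr (hatLap n f) z r - ((n:ℝ)*z/r^2) * pdr f z r - 2 * pdr (pdz f) z r := by
  intro z0 r0 hr0
  have hfz := hf.pdz
  have hfr := hf.pdr
  have h1 : ∀ z r : ℝ, 0 < r →
      pdz (fun z r => z * pdr f z r) z r = pdr f z r + z * pdz (pdr f) z r := dz_zmul hfr
  have h2 : ∀ z r : ℝ, 0 < r →
      pdr (fun z r => z * pdr f z r) z r = z * pdr (pdr f) z r := dr_zmul hfr
  have h3 : pdz (pdz (fun z r => z * pdr f z r)) z0 r0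
      = pdz (pdr f) z0 r0 + (pdz (pdr f) z0 r0 + z0 * pdz (pdz (pdr f)) z0 r0) := by
    rw [cong_pdz h1 z0 r0 hr0]
    simp only [dz_add hfr (Sm.zmul hfr.pdz) z0 r0 hr0, dz_zmul hfr.pdz z0 r0 hr0]
  have h4 : pdr (pdr (fun z r => z * pdr f z r)) z0 r0 = z0 * pdr (pdr (pdr f)) z0 r0 := by
    rw [cong_pdr h2 z0 r0 hr0]
    exact dr_zmul hfr.pdr z0 r0 hr0
  have hc : ContDiffOn ℝ (⊤:ℕ∞) (fun r : ℝ => (n:ℝ)/r) (Set.Ioi (0:ℝ)) :=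
    contDiffOn_const.div contDiffOn_id (fun x hx => ne_of_gt hx)
  have hdc : HasDerivAt (fun r : ℝ => (n:ℝ)/r) (-(n:ℝ)/r0^2) r0 := by
    have h := (hasDerivAt_const r0 (n:ℝ)).div (hasDerivAt_id r0) hr0.ne'
    refine h.congr_deriv ?_
    have : r0 ≠ 0 := hr0.ne'
    simp only [id]
    field_simp
    ring
  have h5 : pdr (hatLap n f) z0 r0
      = -pdr (pdz (pdz f)) z0 r0 - pdr (pdr (pdr f)) z0 r0
        - (-(n:ℝ)/r0^2 * pdr f z0 r0 + (n:ℝ)/r0 * pdr (pdr f) z0 r0) := by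
    have e : hatLap n f
        = fun z r => -pdz (pdz f) z r - pdr (pdr f) z r - ((n:ℝ)/r) * pdr f z r := rfl
    rw [e]
    simp only [dr_sub (Sm.sub (Sm.neg hfz.pdz) hfr.pdr) (Sm.cmul hc hfr) z0 r0 hr0,
      dr_sub (Sm.neg hfz.pdz) hfr.pdr z0 r0 hr0, dr_neg hfz.pdz z0 r0 hr0,
      dr_cmul hfr z0 r0 hr0 hdc]
  have s1 := schwarz hf
  have s3 : pdz (pdz (pdr f)) z0 r0 = pdr (pdz (pdz f)) z0 r0 := by
    rw [cong_pdz s1 z0 r0 hr0]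
    exact schwarz hf.pdz z0 r0 hr0
  rw [h5]
  simp only [hatLap]
  rw [h3, h4, h2 z0 r0 hr0, s3, s1 z0 r0 hr0]
  ring

set_option maxHeartbeats 2000000 in
/-- Lemma B.3 of the paper: the coupled system of six equations satisfied by
`P⁽²⁾, P⁽³⁾, Q⁽¹⁾, Q⁽²⁾, R, S` derived from a solution `P⁽¹⁾` of
`Δ̂ₙ P⁽¹⁾ + λ r⁻² P⁽¹⁾ = 0`. -/
theorem system_two_tensors_X (n : ℕ) (hn : 2 ≤ n) (lam : ℝ) (hlam : (n : ℝ) < lam)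
    (P1 P2 P3 Q1 Q2 R S : ℝ → ℝ → ℝ)
    (hP1smooth : ContDiffOn ℝ (⊤ : ℕ∞) (Function.uncurry P1) {p : ℝ × ℝ | 0 < p.2})
    (hP2smooth : ContDiffOn ℝ (⊤ : ℕ∞) (Function.uncurry P2) {p : ℝ × ℝ | 0 < p.2})
    (hP3smooth : ContDiffOn ℝ (⊤ : ℕ∞) (Function.uncurry P3) {p : ℝ × ℝ | 0 < p.2})
    (hQ1smooth : ContDiffOn ℝ (⊤ : ℕ∞) (Function.uncurry Q1) {p : ℝ × ℝ | 0 < p.2})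
    (hQ2smooth : ContDiffOn ℝ (⊤ : ℕ∞) (Function.uncurry Q2) {p : ℝ × ℝ | 0 < p.2})
    (hRsmooth : ContDiffOn ℝ (⊤ : ℕ∞) (Function.uncurry R) {p : ℝ × ℝ | 0 < p.2})
    (hSsmooth : ContDiffOn ℝ (⊤ : ℕ∞) (Function.uncurry S) {p : ℝ × ℝ | 0 < p.2})
    (hP1 : ∀ z r : ℝ, 0 < r → hatLap n P1 z r + lam / r ^ 2 * P1 z r = 0)
    (hP2 : ∀ z r : ℝ, 0 < r → P2 z r = -(z / r) * P1 z r)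
    (hP3 : ∀ z r : ℝ, 0 < r → P3 z r = z ^ 2 / r ^ 2 * P1 z r)
    (hQ2 : ∀ z r : ℝ, 0 < r → Q2 z r = -(z / r) * Q1 z r)
    (hS : ∀ z r : ℝ, 0 < r → (n : ℝ) * S z r = -P1 z r - P3 z r)
    (hQ1 : ∀ z r : ℝ, 0 < r →
      lam * Q1 z r = r * pdz P1 z r + r * pdr P2 z r + (n : ℝ) * P2 z r)
    (hQ2def : ∀ z r : ℝ, 0 < r →
      lam * Q2 z r = r * pdz P2 z r + r * pdr P3 z r + (n : ℝ) * P3 z r - (n : ℝ) * S z r)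
    (hR : ∀ z r : ℝ, 0 < r →
      ((n : ℝ) - 1) * (lam - n) * R z r
        = r * pdz Q1 z r + r * pdr Q2 z r + ((n : ℝ) + 1) * Q2 z r + S z r) :
    ∀ z r : ℝ, 0 < r →
      (hatLap n P2 z r + (lam + n) / r ^ 2 * P2 z r - 2 * lam / r ^ 2 * Q1 z r = 0)
      ∧ (hatLap n Q1 z r + (lam - n + 2) / r ^ 2 * Q1 z r - 2 / r ^ 2 * P2 z r = 0)
      ∧ (hatLap n P3 z r + (lam + 2 * n) / r ^ 2 * P3 z r - 2 * n / r ^ 2 * S z r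
          - 4 * lam / r ^ 2 * Q2 z r = 0)
      ∧ (hatLap n S z r + (lam + 2) / r ^ 2 * S z r - 2 / r ^ 2 * P3 z r
          + 4 * lam / (n : ℝ) / r ^ 2 * Q2 z r = 0)
      ∧ (hatLap n Q2 z r + (lam + 4) / r ^ 2 * Q2 z r - 2 / r ^ 2 * P3 z r
          + 2 / r ^ 2 * S z r + 2 * ((n : ℝ) - 1) * ((n : ℝ) - lam) / r ^ 2 * R z r = 0)
      ∧ (hatLap n R z r + (lam - 2 * n + 2) / r ^ 2 * R z r
          - 4 / (n : ℝ) / r ^ 2 * Q2 z r = 0) := by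
  -- basic nonvanishing facts
  have hn2 : (2:ℝ) ≤ (n:ℝ) := by exact_mod_cast hn
  have hn0 : (n:ℝ) ≠ 0 := by linarith
  have hl0 : lam ≠ 0 := by linarith
  have hc0 : ((n:ℝ) - 1) * (lam - (n:ℝ)) ≠ 0 :=
    mul_ne_zero (by linarith) (by linarith)
  have hc1 : (n:ℝ) - 1 ≠ 0 := by linarith
  have hc2 : lam - (n:ℝ) ≠ 0 := by linarith
  -- smoothness
  have hP1s : Sm P1 := hP1smooth.of_le (by simp)
  have hP2s : Sm P2 := hP2smooth.of_le (by simp)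
  have hP3s : Sm P3 := hP3smooth.of_le (by simp)
  have hQ1s : Sm Q1 := hQ1smooth.of_le (by simp)
  have hSs : Sm S := hSsmooth.of_le (by simp)
  -- canonical formulas
  have hP2c : ∀ z r : ℝ, 0 < r → P2 z r = z * (-r⁻¹ * P1 z r) := by
    intro z r hr; rw [hP2 z r hr]; ring
  have hP3c : ∀ z r : ℝ, 0 < r → P3 z r = z * (-r⁻¹ * P2 z r) := by
    intro z r hr; rw [hP3 z r hr, hP2 z r hr]
    have hr' : r ≠ 0 := ne_of_gt hr
    field_simp
  have hQ2c : ∀ z r : ℝ, 0 < r → Q2 z r = z * (-r⁻¹ * Q1 z r) := by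
    intro z r hr; rw [hQ2 z r hr]; ring
  have hSc : ∀ z r : ℝ, 0 < r → S z r = -(n:ℝ)⁻¹ * (P1 z r + P3 z r) := by
    intro z r hr
    have h := hS z r hr
    field_simp
    linear_combination h
  have pdzP2v : ∀ z r : ℝ, 0 < r →
      pdz P2 z r = -r⁻¹ * P1 z r + z * (-r⁻¹ * pdz P1 z r) := by
    intro z r hr; rw [cong_pdz hP2c z r hr]; exact dzA hP1s z r hr
  have pdrP2v : ∀ z r : ℝ, 0 < r →
      pdr P2 z r = z * ((r^2)⁻¹ * P1 z r + -r⁻¹ * pdr P1 z r) := by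
    intro z r hr; rw [cong_pdr hP2c z r hr]; exact drA hP1s z r hr
  have hQ1f : ∀ z r : ℝ, 0 < r → Q1 z r
      = lam⁻¹ * ((r * pdz P1 z r + (-1:ℝ) * (z * pdr P1 z r))
          + ((n:ℝ)-1) * (z * (-r⁻¹ * P1 z r))) := by
    intro z r hr
    have h := hQ1 z r hr
    rw [pdrP2v z r hr, hP2 z r hr] at h
    have hr' : r ≠ 0 := ne_of_gt hr
    apply mul_left_cancel₀ hl0
    rw [h]
    field_simp
    ring
  have hHP1 : ∀ z r : ℝ, 0 < r → hatLap n P1 z r = -(lam*(r^2)⁻¹) * P1 z r := by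
    intro z r hr
    have hr' : r ≠ 0 := ne_of_gt hr
    have h := hP1 z r hr
    field_simp at h ⊢
    linarith
  have pdzHP1 : ∀ z r : ℝ, 0 < r →
      pdz (hatLap n P1) z r = -(lam*(r^2)⁻¹) * pdz P1 z r := by
    intro z r hr; rw [cong_pdz hHP1 z r hr]
    exact dz_cmul (fun r => -(lam*(r^2)⁻¹)) hP1s z r hr
  have pdrHP1 : ∀ z r : ℝ, 0 < r → pdr (hatLap n P1) z r
      = (lam*(2*(r^3)⁻¹)) * P1 z r + -(lam*(r^2)⁻¹) * pdr P1 z r := by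
    intro z r hr; rw [cong_pdr hHP1 z r hr]
    have hdc : HasDerivAt (fun r : ℝ => -(lam*(r^2)⁻¹)) (lam*(2*(r^3)⁻¹)) r := by
      have h := ((hd_inv_sq hr).const_mul lam).neg
      refine h.congr_deriv ?_; ring
    exact dr_cmul hP1s z r hr hdc
  -- Equation 1
  have E1 : ∀ z r : ℝ, 0 < r → hatLap n P2 z r
      = (-(lam+(n:ℝ)))*(r^2)⁻¹ * P2 z r + (2*lam)*(r^2)⁻¹ * Q1 z r := by
    intro z r hr
    have hr' : r ≠ 0 := ne_of_gt hr
    rw [cong_hatLap hP2c n z r hr, hat_A n hP1s z r hr, hHP1 z r hr, hP2 z r hr,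
      hQ1f z r hr]
    field_simp
    ring
  -- Equation 2
  have SmB1 : Sm (fun z r => r * pdz P1 z r) := Sm.cmul contDiffOn_id hP1s.pdz
  have SmC1 : Sm (fun z r => z * pdr P1 z r) := Sm.zmul hP1s.pdr
  have SmC1' : Sm (fun z r => (-1:ℝ) * (z * pdr P1 z r)) := Sm.cmul contDiffOn_const SmC1
  have SmA1 : Sm (fun z r => z * (-r⁻¹ * P1 z r)) := Sm.zmul (Sm.cmul cdiff_neg_inv hP1s)
  have SmA1' : Sm (fun z r => ((n:ℝ)-1) * (z * (-r⁻¹ * P1 z r))) :=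
    Sm.cmul contDiffOn_const SmA1
  have SmS1 : Sm (fun z r => r * pdz P1 z r + (-1:ℝ) * (z * pdr P1 z r)) := Sm.add SmB1 SmC1'
  have SmS2 : Sm (fun z r => (r * pdz P1 z r + (-1:ℝ) * (z * pdr P1 z r))
      + ((n:ℝ)-1) * (z * (-r⁻¹ * P1 z r))) := Sm.add SmS1 SmA1'
  have E2 : ∀ z r : ℝ, 0 < r → hatLap n Q1 z r
      = (((n:ℝ)-2-lam)*(r^2)⁻¹) * Q1 z r + (2*(r^2)⁻¹) * P2 z r := by
    intro z r hr
    have hr' : r ≠ 0 := ne_of_gt hr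
    rw [cong_hatLap hQ1f n z r hr]
    simp only [hat_smul n lam⁻¹ SmS2 z r hr, hat_add n SmS1 SmA1' z r hr,
      hat_add n SmB1 SmC1' z r hr, hat_smul n (-1:ℝ) SmC1 z r hr,
      hat_smul n ((n:ℝ)-1) SmA1 z r hr, hat_B n hP1s z r hr, hat_C n hP1s z r hr,
      hat_A n hP1s z r hr]
    rw [pdzHP1 z r hr, pdrHP1 z r hr, hHP1 z r hr, hQ1f z r hr, hP2 z r hr]
    field_simp
    ring
  -- Equation 3
  have E3 : ∀ z r : ℝ, 0 < r → hatLap n P3 z r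
      = (-(lam+2*(n:ℝ)))*(r^2)⁻¹ * P3 z r + (2*(n:ℝ))*(r^2)⁻¹ * S z r
        + (4*lam)*(r^2)⁻¹ * Q2 z r := by
    intro z r hr
    have hr' : r ≠ 0 := ne_of_gt hr
    rw [cong_hatLap hP3c n z r hr, hat_A n hP2s z r hr, E1 z r hr, pdzP2v z r hr,
      pdrP2v z r hr, hQ2 z r hr, hSc z r hr, hP3 z r hr, hP2 z r hr, hQ1f z r hr]
    field_simp
    ring
  -- Equation 4
  have SmS3 : Sm (fun z r => P1 z r + P3 z r) := Sm.add hP1s hP3s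
  have E4 : ∀ z r : ℝ, 0 < r → hatLap n S z r
      = (-(lam+2))*(r^2)⁻¹ * S z r + 2*(r^2)⁻¹ * P3 z r
        - (4*lam*(n:ℝ)⁻¹)*(r^2)⁻¹ * Q2 z r := by
    intro z r hr
    have hr' : r ≠ 0 := ne_of_gt hr
    rw [cong_hatLap hSc n z r hr]
    simp only [hat_smul n (-(n:ℝ)⁻¹) SmS3 z r hr, hat_add n hP1s hP3s z r hr]
    rw [hHP1 z r hr, E3 z r hr, hSc z r hr]
    field_simp
    ring
  -- pdr of Q2 and isolated R
  have pdrQ2v : ∀ z r : ℝ, 0 < r →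
      pdr Q2 z r = z * ((r^2)⁻¹ * Q1 z r + -r⁻¹ * pdr Q1 z r) := by
    intro z r hr; rw [cong_pdr hQ2c z r hr]; exact drA hQ1s z r hr
  have hRf : ∀ z r : ℝ, 0 < r → R z r
      = (((n:ℝ)-1)*(lam-(n:ℝ)))⁻¹ * ((r * pdz Q1 z r + (-1:ℝ) * (z * pdr Q1 z r))
          + ((n:ℝ) * (z * (-r⁻¹ * Q1 z r)) + S z r)) := by
    intro z r hr
    have h := hR z r hr
    rw [pdrQ2v z r hr, hQ2 z r hr] at h
    have hr' : r ≠ 0 := ne_of_gt hr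
    apply mul_left_cancel₀ hc0
    rw [h]
    field_simp
    ring
  -- Equation 5
  have E5 : ∀ z r : ℝ, 0 < r → hatLap n Q2 z r + (lam + 4) / r ^ 2 * Q2 z r
      - 2 / r ^ 2 * P3 z r + 2 / r ^ 2 * S z r
      + 2 * ((n : ℝ) - 1) * ((n : ℝ) - lam) / r ^ 2 * R z r = 0 := by
    intro z r hr
    have hr' : r ≠ 0 := ne_of_gt hr
    rw [cong_hatLap hQ2c n z r hr, hat_A n hQ1s z r hr, E2 z r hr, hRf z r hr,
      hQ2 z r hr, hSc z r hr, hP3 z r hr, hP2 z r hr, hQ1f z r hr]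
    field_simp
    ring
  -- Equation 6
  have SmBQ : Sm (fun z r => r * pdz Q1 z r) := Sm.cmul contDiffOn_id hQ1s.pdz
  have SmCQ : Sm (fun z r => z * pdr Q1 z r) := Sm.zmul hQ1s.pdr
  have SmCQ' : Sm (fun z r => (-1:ℝ) * (z * pdr Q1 z r)) := Sm.cmul contDiffOn_const SmCQ
  have SmAQ : Sm (fun z r => z * (-r⁻¹ * Q1 z r)) := Sm.zmul (Sm.cmul cdiff_neg_inv hQ1s)
  have SmAQ' : Sm (fun z r => (n:ℝ) * (z * (-r⁻¹ * Q1 z r))) := Sm.cmul contDiffOn_const SmAQ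
  have SmT1 : Sm (fun z r => r * pdz Q1 z r + (-1:ℝ) * (z * pdr Q1 z r)) := Sm.add SmBQ SmCQ'
  have SmT2 : Sm (fun z r => (n:ℝ) * (z * (-r⁻¹ * Q1 z r)) + S z r) := Sm.add SmAQ' hSs
  have SmT3 : Sm (fun z r => (r * pdz Q1 z r + (-1:ℝ) * (z * pdr Q1 z r))
      + ((n:ℝ) * (z * (-r⁻¹ * Q1 z r)) + S z r)) := Sm.add SmT1 SmT2
  have c1s : ContDiffOn ℝ (⊤:ℕ∞) (fun r:ℝ => ((n:ℝ)-2-lam)*(r^2)⁻¹) (Set.Ioi (0:ℝ)) :=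
    cdiff_const_mul _ cdiff_inv_sq
  have c2s : ContDiffOn ℝ (⊤:ℕ∞) (fun r:ℝ => 2*(r^2)⁻¹) (Set.Ioi (0:ℝ)) :=
    cdiff_const_mul _ cdiff_inv_sq
  have pdzHQ1 : ∀ z r : ℝ, 0 < r → pdz (hatLap n Q1) z r
      = (((n:ℝ)-2-lam)*(r^2)⁻¹) * pdz Q1 z r + (2*(r^2)⁻¹) * pdz P2 z r := by
    intro z r hr
    rw [cong_pdz E2 z r hr]
    simp only [dz_add (Sm.cmul c1s hQ1s) (Sm.cmul c2s hP2s) z r hr,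
      dz_cmul (fun r => ((n:ℝ)-2-lam)*(r^2)⁻¹) hQ1s z r hr,
      dz_cmul (fun r => 2*(r^2)⁻¹) hP2s z r hr]
  have pdrHQ1 : ∀ z r : ℝ, 0 < r → pdr (hatLap n Q1) z r
      = (((n:ℝ)-2-lam)*(-2*(r^3)⁻¹)) * Q1 z r + (((n:ℝ)-2-lam)*(r^2)⁻¹) * pdr Q1 z r
        + ((2*(-2*(r^3)⁻¹)) * P2 z r + (2*(r^2)⁻¹) * pdr P2 z r) := by
    intro z r hr
    rw [cong_pdr E2 z r hr]
    have hd1 : HasDerivAt (fun r:ℝ => ((n:ℝ)-2-lam)*(r^2)⁻¹) (((n:ℝ)-2-lam)*(-2*(r^3)⁻¹)) r :=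
      (hd_inv_sq hr).const_mul _
    have hd2 : HasDerivAt (fun r:ℝ => 2*(r^2)⁻¹) ((2:ℝ)*(-2*(r^3)⁻¹)) r :=
      (hd_inv_sq hr).const_mul _
    simp only [dr_add (Sm.cmul c1s hQ1s) (Sm.cmul c2s hP2s) z r hr,
      dr_cmul hQ1s z r hr hd1, dr_cmul hP2s z r hr hd2]
  have E6 : ∀ z r : ℝ, 0 < r → hatLap n R z r + (lam - 2*(n:ℝ) + 2)/r^2 * R z r
      - 4/(n:ℝ)/r^2 * Q2 z r = 0 := by
    intro z r hr
    have hr' : r ≠ 0 := ne_of_gt hr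
    rw [cong_hatLap hRf n z r hr]
    simp only [hat_smul n (((n:ℝ)-1)*(lam-(n:ℝ)))⁻¹ SmT3 z r hr,
      hat_add n SmT1 SmT2 z r hr, hat_add n SmBQ SmCQ' z r hr, hat_add n SmAQ' hSs z r hr,
      hat_smul n (-1:ℝ) SmCQ z r hr, hat_smul n ((n:ℝ)) SmAQ z r hr,
      hat_B n hQ1s z r hr, hat_C n hQ1s z r hr, hat_A n hQ1s z r hr]
    rw [pdzHQ1 z r hr]
    rw [pdrHQ1 z r hr]
    rw [E2 z r hr]
    rw [E4 z r hr]
    rw [hRf z r hr]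
    rw [pdzP2v z r hr]
    rw [pdrP2v z r hr]
    rw [hQ2 z r hr]
    rw [hSc z r hr]
    rw [hP3 z r hr]
    rw [hP2 z r hr]
    rw [hQ1f z r hr]
    field_simp
    ring
  -- assemble
  intro z r hr
  have hr' : r ≠ 0 := ne_of_gt hr
  refine ⟨?_, ?_, ?_, ?_, ?_, E6 z r hr⟩
  · linear_combination E1 z r hr
  · linear_combination E2 z r hr
  · linear_combination E3 z r hr
  · linear_combination E4 z r hr
  · exact E5 z r hr
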